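/- arXiv:2508.18759 — 2 statements merged into one kernel-verified Lean document; each statement's English description precedes it below -/
import Mathlib

section
/- Fix natural numbers k < n and a k-dimensional linear subspace V of ℝⁿ. Let δ > 0, let p ∈ ℝⁿ, and let Δ be a linear d-simplex in ℝⁿ with d < n − k, p ∉ ASpan(Δ), and whose affine span contains the origin. Let π_Δ denote the orthogonal projection of ℝⁿ onto Gr(Δ)⊥. Then the join p⋆Δ is δ-semitransverse to 𝔉(V) in p if and only if Δ is transverse to 𝔉(V) and the open ball B(π_Δ(p), δ) in Gr(Δ)⊥ is disjoint from π_Δ(V). -/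
/-!
Since `0 ∈ ASpan Δ`, the direction space of `p' ⋆ Δ` is `ℝ p' + D` with `D = Gr(Δ)`, and because
`dim D + 1 + dim V ≤ n`, transversality to `V` just means meeting `V` trivially. Hence `p' ⋆ Δ` is
a non-degenerate simplex transverse to `V` iff `D ∩ V = 0` and `p' ∉ D + V`. Finally `D + V` is
the preimage of `π_Δ(V)` under the 1-Lipschitz projection `π_Δ`, whose kernel is `D`, so the
`δ`-ball around `p` misses `D + V` iff the `δ`-ball around `π_Δ(p)` misses `π_Δ(V)`.
-/

noncomputable section

open Metric Set

/-- Two linear subspaces of ℝⁿ are transverse if the dimension of their span is maximal. -/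
def Transv {n : ℕ} (V W : Submodule ℝ (EuclideanSpace ℝ (Fin n))) : Prop :=
  Module.finrank ℝ ↥(V ⊔ W) = min (Module.finrank ℝ ↥V + Module.finrank ℝ ↥W) n

/-- The space of directions of the affine span of a family of points (Gr(Δ)). -/
def simplexDir {n m : ℕ} (v : Fin m → EuclideanSpace ℝ (Fin n)) :
    Submodule ℝ (EuclideanSpace ℝ (Fin n)) :=
  (affineSpan ℝ (Set.range v)).direction

/-- Orthogonal projection of ℝⁿ onto the orthogonal complement of V, as a map ℝⁿ → ℝⁿ. -/
def projPerp {n : ℕ} (V : Submodule ℝ (EuclideanSpace ℝ (Fin n)))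
    (x : EuclideanSpace ℝ (Fin n)) : EuclideanSpace ℝ (Fin n) :=
  (Submodule.orthogonalProjectionOnto Vᗮ x : EuclideanSpace ℝ (Fin n))

/-- Orthogonal projection onto V as a continuous linear endomorphism of ℝⁿ. -/
def projCL {n : ℕ} (V : Submodule ℝ (EuclideanSpace ℝ (Fin n))) :
    EuclideanSpace ℝ (Fin n) →L[ℝ] EuclideanSpace ℝ (Fin n) :=
  V.subtypeL.comp (Submodule.orthogonalProjectionOnto V)

/-- Operator-norm distance between orthogonal projections. -/
def dProj {n : ℕ} (V W : Submodule ℝ (EuclideanSpace ℝ (Fin n))) : ℝ :=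
  ‖projCL V - projCL W‖

/-- `p⋆Δ` is `δ`-semitransverse to `𝔉(V)` in `p`. -/
def SemiT {n m : ℕ} (δ : ℝ) (p : EuclideanSpace ℝ (Fin n))
    (v : Fin m → EuclideanSpace ℝ (Fin n))
    (V : Submodule ℝ (EuclideanSpace ℝ (Fin n))) : Prop :=
  ∀ p' : EuclideanSpace ℝ (Fin n), dist p' p < δ →
    AffineIndependent ℝ (Fin.cons p' v : Fin (m+1) → EuclideanSpace ℝ (Fin n)) ∧
    Transv (simplexDir (Fin.cons p' v : Fin (m+1) → EuclideanSpace ℝ (Fin n))) V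

/-- Maximal distance between two vertices of a simplex. -/
def rMax {n m : ℕ} (v : Fin m → EuclideanSpace ℝ (Fin n)) : ℝ :=
  ⨆ i, ⨆ j, dist (v i) (v j)

/-- Minimal distance between a vertex and the affine span of the opposite face. -/
def rMin {n m : ℕ} (v : Fin m → EuclideanSpace ℝ (Fin n)) : ℝ :=
  ⨅ i, Metric.infDist (v i) (affineSpan ℝ (v '' {i}ᶜ) : Set (EuclideanSpace ℝ (Fin n)))

/-- The degeneracy quantity Λ(Δ). -/
def Lam {n m : ℕ} (v : Fin (m+1) → EuclideanSpace ℝ (Fin n)) : ℝ :=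
  sSup {t : ℝ | ∃ lam : Fin m → ℝ,
    ‖∑ i, lam i • (v i.succ - v 0)‖ = 1 ∧ ∃ i, t = |lam i|}

/-- ε-transversality of a simplex with vertices `v` to the constant foliation `𝔉(V)`. -/
def EpsT {n m : ℕ} (ε : ℝ) (v : Fin (m+1) → EuclideanSpace ℝ (Fin n))
    (V : Submodule ℝ (EuclideanSpace ℝ (Fin n))) : Prop :=
  ∀ D : Submodule ℝ (EuclideanSpace ℝ (Fin n)),
    Module.finrank ℝ ↥D = m → dProj (simplexDir v) D < ε → Transv D V

/-- δ-semitransversality of a simplex in its `i`-th vertex. -/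
def STat {n m : ℕ} (δ : ℝ) (w : Fin m → EuclideanSpace ℝ (Fin n)) (i : Fin m)
    (V : Submodule ℝ (EuclideanSpace ℝ (Fin n))) : Prop :=
  ∀ p' : EuclideanSpace ℝ (Fin n), dist p' (w i) < δ →
    AffineIndependent ℝ (Function.update w i p') ∧
    Transv (simplexDir (Function.update w i p')) V

/-- The coordinate subspace ℝᵏ × {0} of ℝⁿ. -/
def stdFol (n k : ℕ) : Submodule ℝ (EuclideanSpace ℝ (Fin n)) where
  carrier := {x | ∀ i : Fin n, k ≤ (i : ℕ) → x i = 0}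
  zero_mem' := fun i _ => rfl
  add_mem' := by
    intro x y hx hy i hi
    show x i + y i = 0
    rw [hx i hi, hy i hi, add_zero]
  smul_mem' := by
    intro c x hx i hi
    show c * x i = 0
    rw [hx i hi, mul_zero]

/-- Graph of a linear map V → V⊥ as a subspace of ℝⁿ. -/
def graphOf {n : ℕ} {V : Submodule ℝ (EuclideanSpace ℝ (Fin n))}
    (T : ↥V →L[ℝ] ↥Vᗮ) : Submodule ℝ (EuclideanSpace ℝ (Fin n)) :=
  LinearMap.range (V.subtype + Vᗮ.subtype.comp T.toLinearMap)

section LinearAlgebra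

variable {K E : Type*} [Field K] [AddCommGroup E] [Module K E]

theorem Submodule.span_singleton_sup_inf_eq_bot_and_notMem_iff {D W : Submodule K E} {x : E} :
    (K ∙ x ⊔ D) ⊓ W = ⊥ ∧ x ∉ D ↔ D ⊓ W = ⊥ ∧ x ∉ D ⊔ W := by
  constructor
  · rintro ⟨hxDW, hxD⟩
    refine ⟨le_bot_iff.1 (hxDW ▸ inf_le_inf_right W le_sup_right), fun hx => hxD ?_⟩
    obtain ⟨y, hy, w, hw, rfl⟩ := Submodule.mem_sup.1 hx
    have hw' : w ∈ (K ∙ (y + w) ⊔ D) ⊓ W := by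
      refine ⟨?_, hw⟩
      simpa using Submodule.sub_mem _
        (Submodule.mem_sup_left (Submodule.mem_span_singleton_self (y + w)))
        (Submodule.mem_sup_right hy : y ∈ K ∙ (y + w) ⊔ D)
    rw [hxDW, Submodule.mem_bot] at hw'
    simpa [hw'] using hy
  · rintro ⟨hDW, hx⟩
    refine ⟨(Submodule.eq_bot_iff _).2 ?_, fun h => hx (Submodule.mem_sup_left h)⟩
    rintro z ⟨hz, hzW⟩
    obtain ⟨_, hy, y, hyD, rfl⟩ := Submodule.mem_sup.1 hz
    obtain ⟨c, rfl⟩ := Submodule.mem_span_singleton.1 hy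
    rcases eq_or_ne c 0 with rfl | hc
    · rw [zero_smul, zero_add] at hzW ⊢
      exact (Submodule.mem_bot K).1 (hDW ▸ ⟨hyD, hzW⟩)
    · refine absurd ?_ hx
      have : c⁻¹ • (c • x + y) - c⁻¹ • y = x := by
        rw [smul_add, smul_smul, inv_mul_cancel₀ hc, one_smul, add_sub_cancel_right]
      rw [← this]
      exact Submodule.sub_mem _ (Submodule.mem_sup_right (Submodule.smul_mem _ _ hzW))
        (Submodule.mem_sup_left (Submodule.smul_mem _ _ hyD))

theorem Submodule.finrank_span_singleton_sup_eq_succ_iff [Module.Finite K E]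
    {D : Submodule K E} {x : E} :
    Module.finrank K ↥(K ∙ x ⊔ D) = Module.finrank K D + 1 ↔ x ∉ D := by
  refine ⟨fun h hx => ?_,
    fun hx => sup_comm (K ∙ x) D ▸ Submodule.finrank_sup_span_singleton hx⟩
  rw [sup_eq_right.2 ((Submodule.span_singleton_le_iff_mem x D).2 hx)] at h
  omega

theorem direction_affineSpan_range_cons {m : ℕ} {v : Fin m → E}
    (h0 : (0 : E) ∈ affineSpan K (range v)) (x : E) :
    (affineSpan K (range (Fin.cons x v : Fin (m + 1) → E))).direction =
      K ∙ x ⊔ (affineSpan K (range v)).direction := by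
  rw [Fin.range_cons, ← affineSpan_insert_affineSpan,
    AffineSubspace.direction_affineSpan_insert h0, vsub_eq_sub, sub_zero]

theorem affineIndependent_cons_iff_notMem_direction [FiniteDimensional K E] {m : ℕ}
    {v : Fin (m + 1) → E} (hv : AffineIndependent K v)
    (h0 : (0 : E) ∈ affineSpan K (range v)) (x : E) :
    AffineIndependent K (Fin.cons x v : Fin (m + 1 + 1) → E) ↔
      x ∉ (affineSpan K (range v)).direction := by
  rw [affineIndependent_iff_finrank_vectorSpan_eq K _ (Fintype.card_fin (m + 1 + 1)),
    ← direction_affineSpan, direction_affineSpan_range_cons h0, direction_affineSpan]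
  have hrank := (affineIndependent_iff_finrank_vectorSpan_eq K v (Fintype.card_fin (m + 1))).1 hv
  simpa only [hrank] using
    Submodule.finrank_span_singleton_sup_eq_succ_iff (K := K) (D := vectorSpan K (range v)) (x := x)

end LinearAlgebra

section Euclidean

variable {n : ℕ} (D : Submodule ℝ (EuclideanSpace ℝ (Fin n)))

theorem transv_iff_inf_eq_bot {W V : Submodule ℝ (EuclideanSpace ℝ (Fin n))}
    (h : Module.finrank ℝ W + Module.finrank ℝ V ≤ n) : Transv W V ↔ W ⊓ V = ⊥ := by
  have hsum := Submodule.finrank_sup_add_finrank_inf_eq W V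
  rw [Transv, min_eq_left h, ← Submodule.finrank_eq_zero]
  omega

theorem finrank_simplexDir_le {m : ℕ} (v : Fin (m + 1) → EuclideanSpace ℝ (Fin n)) :
    Module.finrank ℝ (simplexDir v) ≤ m := by
  rw [simplexDir, direction_affineSpan]
  exact finrank_vectorSpan_range_le ℝ v (Fintype.card_fin _)

theorem projPerp_apply (x : EuclideanSpace ℝ (Fin n)) : projPerp D x = Dᗮ.starProjection x :=
  rfl

theorem sub_projPerp_mem (x : EuclideanSpace ℝ (Fin n)) : x - projPerp D x ∈ D := by
  rw [projPerp_apply]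
  simpa only [Submodule.orthogonal_orthogonal] using Dᗮ.sub_starProjection_mem_orthogonal x

theorem projPerp_eq_projPerp_iff (x y : EuclideanSpace ℝ (Fin n)) :
    projPerp D x = projPerp D y ↔ x - y ∈ D := by
  rw [← sub_eq_zero, projPerp_apply, projPerp_apply, ← map_sub,
    Submodule.starProjection_apply_eq_zero_iff, Submodule.orthogonal_orthogonal]

theorem dist_projPerp_le (x y : EuclideanSpace ℝ (Fin n)) :
    dist (projPerp D x) (projPerp D y) ≤ dist x y := by
  simpa only [projPerp_apply, dist_eq_norm, ← map_sub] using
    Dᗮ.norm_starProjection_apply_le (x - y)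

theorem ball_projPerp_inter_image_eq_empty_iff (W : Submodule ℝ (EuclideanSpace ℝ (Fin n)))
    (p : EuclideanSpace ℝ (Fin n)) (δ : ℝ) :
    ball (projPerp D p) δ ∩ projPerp D '' W = ∅ ↔ ball p δ ∩ ↑(D ⊔ W) = ∅ := by
  simp only [eq_empty_iff_forall_notMem, mem_inter_iff, mem_image, mem_ball, SetLike.mem_coe]
  constructor
  · rintro h p' ⟨hp', hp'DW⟩
    obtain ⟨y, hy, w, hw, rfl⟩ := Submodule.mem_sup.1 hp'DW
    have hproj : projPerp D (y + w) = projPerp D w := by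
      rwa [projPerp_eq_projPerp_iff, add_sub_cancel_right]
    exact h _ ⟨hproj ▸ (dist_projPerp_le D _ _).trans_lt hp', w, hw, rfl⟩
  · rintro h _ ⟨hw', w, hw, rfl⟩
    set p' := p - projPerp D p + projPerp D w
    have hp'w : p' - w = (p - w) - projPerp D (p - w) := by
      simp only [p', projPerp_apply, map_sub]
      abel
    refine h p' ⟨?_, ?_⟩
    · rwa [dist_eq_norm, show p' - p = projPerp D w - projPerp D p by simp only [p']; abel,
        ← dist_eq_norm]
    · have hp'DW := Submodule.add_mem_sup (hp'w ▸ sub_projPerp_mem D (p - w)) hw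
      rwa [sub_add_cancel] at hp'DW

end Euclidean

theorem stmt_4_general (n k d : ℕ) (hd : d < n - k)
    (V : Submodule ℝ (EuclideanSpace ℝ (Fin n))) (hV : Module.finrank ℝ ↥V = k)
    (δ : ℝ) (hδ : 0 < δ)
    (p : EuclideanSpace ℝ (Fin n)) (v : Fin (d+1) → EuclideanSpace ℝ (Fin n))
    (hAI : AffineIndependent ℝ v)
    (h0 : (0 : EuclideanSpace ℝ (Fin n)) ∈ affineSpan ℝ (Set.range v)) :
    SemiT δ p v V ↔
      (Transv (simplexDir v) V ∧
        Metric.ball (projPerp (simplexDir v) p) δ ∩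
          (projPerp (simplexDir v) '' (V : Set (EuclideanSpace ℝ (Fin n)))) = ∅) := by
  set D := simplexDir v
  have hjoin : ∀ p', (AffineIndependent ℝ (Fin.cons p' v : Fin (d + 1 + 1) → _) ∧
      Transv (simplexDir (Fin.cons p' v : Fin (d + 1 + 1) → _)) V) ↔
        D ⊓ V = ⊥ ∧ p' ∉ D ⊔ V := by
    intro p'
    have hrank := finrank_simplexDir_le (Fin.cons p' v : Fin (d + 1 + 1) → _)
    rw [affineIndependent_cons_iff_notMem_direction hAI h0, transv_iff_inf_eq_bot (by omega),
      simplexDir, direction_affineSpan_range_cons h0, and_comm]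
    exact Submodule.span_singleton_sup_inf_eq_bot_and_notMem_iff
  have hrank : Module.finrank ℝ D ≤ d := finrank_simplexDir_le v
  rw [SemiT, transv_iff_inf_eq_bot (by omega), ball_projPerp_inter_image_eq_empty_iff]
  simp only [hjoin, eq_empty_iff_forall_notMem, mem_inter_iff, mem_ball, SetLike.mem_coe]
  exact ⟨fun h => ⟨(h p (dist_self p ▸ hδ)).1, fun p' hp' => (h p' hp'.1).2 hp'.2⟩,
    fun h p' hp' => ⟨h.1, fun hp'DV => h.2 p' ⟨hp', hp'DV⟩⟩⟩

theorem stmt_4 (n k d : ℕ) (hk : k < n) (hd : d < n - k)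
    (V : Submodule ℝ (EuclideanSpace ℝ (Fin n))) (hV : Module.finrank ℝ ↥V = k)
    (δ : ℝ) (hδ : 0 < δ)
    (p : EuclideanSpace ℝ (Fin n)) (v : Fin (d+1) → EuclideanSpace ℝ (Fin n))
    (hAI : AffineIndependent ℝ v)
    (hp : p ∉ affineSpan ℝ (Set.range v))
    (h0 : (0 : EuclideanSpace ℝ (Fin n)) ∈ affineSpan ℝ (Set.range v)) :
    SemiT δ p v V ↔
      (Transv (simplexDir v) V ∧
        Metric.ball (projPerp (simplexDir v) p) δ ∩
          (projPerp (simplexDir v) '' (V : Set (EuclideanSpace ℝ (Fin n)))) = ∅) :=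
  stmt_4_general n k d hd V hV δ hδ p v hAI h0
end
end

section
/- Fix natural numbers k < n and let 𝔉 denote the constant foliation of ℝⁿ = ℝᵏ × ℝ^{n−k} by the translates of ℝᵏ × {0}. Let ε > 0 and C ∈ ℕ. Then there exists δ > 0 such that the following holds: for every point p ∈ ℝⁿ and every set 𝒟 of C linear simplices in ℝⁿ, each transverse to 𝔉, there exists a point p' ∈ B(p, ε) such that B(p', δ) ⊆ B(p, ε) and for every simplex Δ ∈ 𝒟 of dimension at most n − k − 1 the join p'⋆Δ is a non-degenerate linear simplex that is δ-semitransverse to 𝔉 in p'. -/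
noncomputable section

open Metric Set

/-!
For a simplex `Δ` of dimension `< n - k`, transversality leaves room for a unit normal `u` to
`Gr(Δ) + ℝᵏ`. If `|⟪u, p' - v₀⟫| ≥ δ` for a vertex `v₀` of `Δ`, then every `q ∈ B(p', δ)` has
`q - v₀ ∉ Gr(Δ) + ℝᵏ`, so `q⋆Δ` is non-degenerate and its direction `Gr(Δ) + ℝ (q - v₀)` is still
transverse to `ℝᵏ`. It therefore suffices to find `p' ∈ B̄(p, ε/4)` at distance `≥ δ` from `C`
given affine hyperplanes. Finitely many hyperplanes are Lebesgue-null, so some point of the ball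
avoids them; the best achievable distance depends continuously on the hyperplanes, which range
over a compact set, hence is bounded below by a `δ > 0` depending only on `ε`, `C` and `n`.
-/

open Module RealInnerProductSpace MeasureTheory

section Hyperplanes

variable {E : Type*} [NormedAddCommGroup E] [InnerProductSpace ℝ E] [FiniteDimensional ℝ E]

theorem addHaar_setOf_inner_eq [MeasurableSpace E] [BorelSpace E] (μ : Measure E)
    [μ.IsAddHaarMeasure] {u : E} (hu : u ≠ 0) (s : ℝ) : μ {x | ⟪u, x⟫ = s} = 0 := by
  let H : AffineSubspace ℝ E :=
    (affineSpan ℝ {s}).comap (innerSL ℝ u : E →L[ℝ] ℝ).toLinearMap.toAffineMap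
  have hH : (H : Set E) = {x | ⟪u, x⟫ = s} := by
    ext x; simp [H]
  rw [← hH]
  refine Measure.addHaar_affineSubspace μ H fun htop => hu ?_
  have h0 : (0 : E) ∈ (H : Set E) := htop ▸ AffineSubspace.mem_top ℝ E 0
  have hu' : u ∈ (H : Set E) := htop ▸ AffineSubspace.mem_top ℝ E u
  rw [hH] at h0 hu'
  simp only [mem_ofPred_eq, inner_zero_right, real_inner_self_eq_norm_sq] at h0 hu'
  simpa [← h0] using hu'

theorem exists_mem_closedBall_forall_inner_ne {ι : Type*} [Countable ι] {r : ℝ} (hr : 0 < r)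
    {u : ι → E} (hu : ∀ i, u i ≠ 0) (s : ι → ℝ) :
    ∃ x ∈ closedBall (0 : E) r, ∀ i, ⟪u i, x⟫ ≠ s i := by
  let _ : MeasurableSpace E := borel E
  have _ : BorelSpace E := ⟨rfl⟩
  have hnull : Measure.addHaar (⋃ i, {x : E | ⟪u i, x⟫ = s i}) = 0 :=
    measure_iUnion_null fun i => addHaar_setOf_inner_eq _ (hu i) (s i)
  have hpos : Measure.addHaar (closedBall (0 : E) r \ ⋃ i, {x | ⟪u i, x⟫ = s i}) ≠ 0 := by
    rw [measure_sdiff_null hnull]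
    exact (measure_closedBall_pos _ _ hr).ne'
  obtain ⟨x, hxK, hx⟩ := nonempty_of_measure_ne_zero hpos
  exact ⟨x, hxK, fun i hi => hx (mem_iUnion.2 ⟨i, hi⟩)⟩


theorem exists_norm_le_forall_le_abs_inner_sub (ι : Type*) [Fintype ι] {r : ℝ} (hr : 0 < r) :
    ∃ δ > 0, δ ≤ r ∧ ∀ u : ι → E, (∀ i, ‖u i‖ = 1) → ∀ s : ι → ℝ,
      ∃ x : E, ‖x‖ ≤ r ∧ ∀ i, δ ≤ |⟪u i, x⟫ - s i| := by
  rcases isEmpty_or_nonempty ι with _ | _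
  · exact ⟨r, hr, le_rfl, fun _ _ _ => ⟨0, by simpa using hr.le, isEmptyElim⟩⟩
  set K : Set E := closedBall 0 r
  -- A hyperplane with offset `|s| > 2 r` stays at distance `> r` from `K`, so that offset may be
  -- replaced by `0`; this confines the hyperplanes to the compact set `P`.
  set P : Set (ι → E × ℝ) := univ.pi fun _ => sphere (0 : E) 1 ×ˢ Icc (-(2 * r)) (2 * r)
  let m : (ι → E × ℝ) → E → ℝ := fun w x =>
    Finset.univ.inf' Finset.univ_nonempty fun i => |⟪(w i).1, x⟫ - (w i).2|
  have hm : Continuous ↿m :=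
    Continuous.finset_inf'_apply Finset.univ_nonempty fun i _ => by fun_prop
  have hbdd : ∀ w, BddAbove (m w '' K) := fun w =>
    ((isCompact_closedBall 0 r).image (hm.comp (Continuous.prodMk_right w))).bddAbove
  have hpos : ∀ w ∈ P, 0 < sSup (m w '' K) := by
    intro w hw
    have hu : ∀ i, (w i).1 ≠ 0 := fun i =>
      ne_zero_of_mem_unit_sphere ⟨(w i).1, (hw i (mem_univ i)).1⟩
    obtain ⟨x, hxK, hx⟩ := exists_mem_closedBall_forall_inner_ne hr hu fun i => (w i).2
    refine lt_of_lt_of_le ?_ (le_csSup (hbdd w) (mem_image_of_mem _ hxK))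
    exact (Finset.lt_inf'_iff _).2 fun i _ => abs_pos.2 (sub_ne_zero.2 (hx i))
  obtain ⟨δ₀, hδ₀, hδ₀P⟩ :=
    (isCompact_univ_pi fun _ => (isCompact_sphere 0 1).prod isCompact_Icc).exists_forall_le'
      ((isCompact_closedBall 0 r).continuous_sSup hm).continuousOn hpos
  refine ⟨min (δ₀ / 2) r, by positivity, min_le_right _ _, fun u hu s => ?_⟩
  let s' : ι → ℝ := fun i => if |s i| ≤ 2 * r then s i else 0
  have hwP : (fun i => (u i, s' i)) ∈ P := fun i _ =>
    ⟨by simpa using hu i, by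
      simp only [s']; split_ifs with h
      · exact abs_le.1 h
      · constructor <;> linarith⟩
  obtain ⟨_, ⟨x, hxK, rfl⟩, hx⟩ := exists_lt_of_lt_csSup ((nonempty_closedBall.2 hr.le).image _)
    ((min_le_left _ _).trans_lt ((half_lt_self hδ₀).trans_le (hδ₀P _ hwP)))
  refine ⟨x, mem_closedBall_zero_iff.1 hxK, fun i => ?_⟩
  have hxi : |⟪u i, x⟫| ≤ r :=
    calc |⟪u i, x⟫| ≤ ‖u i‖ * ‖x‖ := abs_real_inner_le_norm _ _
      _ ≤ r := by rw [hu i, one_mul]; exact mem_closedBall_zero_iff.1 hxK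
  have hi := hx.trans_le (Finset.inf'_le _ (Finset.mem_univ i))
  simp only [s'] at hi
  split_ifs at hi with h
  · exact hi.le
  · calc min (δ₀ / 2) r ≤ r := min_le_right _ _
      _ ≤ |s i| - |⟪u i, x⟫| := by linarith [not_le.1 h]
      _ ≤ |⟪u i, x⟫ - s i| := abs_sub_comm (s i) _ ▸ abs_sub_abs_le_abs_sub _ _

end Hyperplanes

section Simplices

variable {n : ℕ}

theorem affineIndependent_iff_finrank_simplexDir {m : ℕ}
    (v : Fin (m + 1) → EuclideanSpace ℝ (Fin n)) :
    AffineIndependent ℝ v ↔ finrank ℝ (simplexDir v) = m := by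
  rw [simplexDir, direction_affineSpan]
  exact affineIndependent_iff_finrank_vectorSpan_eq ℝ v (Fintype.card_fin _)

theorem simplexDir_cons {m : ℕ} (v : Fin (m + 1) → EuclideanSpace ℝ (Fin n))
    (q : EuclideanSpace ℝ (Fin n)) :
    simplexDir (Fin.cons q v : Fin (m + 2) → EuclideanSpace ℝ (Fin n)) =
      Submodule.span ℝ {q - v 0} ⊔ simplexDir v := by
  rw [simplexDir, Fin.range_cons, ← affineSpan_insert_affineSpan,
    AffineSubspace.direction_affineSpan_insert (mem_affineSpan ℝ (mem_range_self 0))]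
  rfl

theorem Transv.span_singleton_sup {D V : Submodule ℝ (EuclideanSpace ℝ (Fin n))}
    (h : Transv D V) (hlt : finrank ℝ D + finrank ℝ V < n) {w : EuclideanSpace ℝ (Fin n)}
    (hw : w ∉ D ⊔ V) : Transv (Submodule.span ℝ {w} ⊔ D) V := by
  have hwD : w ∉ D := fun h => hw (Submodule.mem_sup_left h)
  have hsup : Submodule.span ℝ {w} ⊔ D ⊔ V = D ⊔ V ⊔ Submodule.span ℝ {w} := by
    rw [sup_comm (Submodule.span ℝ {w}), sup_right_comm]
  unfold Transv at h ⊢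
  rw [hsup, Submodule.finrank_sup_span_singleton hw, sup_comm (Submodule.span ℝ {w}),
    Submodule.finrank_sup_span_singleton hwD]
  omega

theorem Transv.exists_norm_eq_one_mem_orthogonal_sup
    {D V : Submodule ℝ (EuclideanSpace ℝ (Fin n))} (h : Transv D V)
    (hlt : finrank ℝ D + finrank ℝ V < n) :
    ∃ u : EuclideanSpace ℝ (Fin n), ‖u‖ = 1 ∧ u ∈ (D ⊔ V)ᗮ := by
  have hne : D ⊔ V ≠ ⊤ := fun htop => by
    unfold Transv at h
    rw [htop, finrank_top, finrank_euclideanSpace_fin] at h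
    omega
  have : Nontrivial (D ⊔ V)ᗮ :=
    Submodule.nontrivial_iff_ne_bot.2 (Submodule.orthogonal_eq_bot_iff.not.2 hne)
  obtain ⟨u, hu⟩ := exists_norm_eq (D ⊔ V)ᗮ zero_le_one
  exact ⟨u, hu, u.2⟩

theorem semiT_of_le_abs_inner {m : ℕ} {v : Fin (m + 1) → EuclideanSpace ℝ (Fin n)}
    {V : Submodule ℝ (EuclideanSpace ℝ (Fin n))} (hv : AffineIndependent ℝ v)
    (hT : Transv (simplexDir v) V) (hlt : m + finrank ℝ V < n)
    {u : EuclideanSpace ℝ (Fin n)} (hu : u ∈ (simplexDir v ⊔ V)ᗮ) (hu1 : ‖u‖ ≤ 1)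
    {δ : ℝ} {p : EuclideanSpace ℝ (Fin n)} (hp : δ ≤ |⟪u, p - v 0⟫|) : SemiT δ p v V := by
  intro q hq
  have hdim := (affineIndependent_iff_finrank_simplexDir v).1 hv
  have hqu : ⟪u, q - v 0⟫ ≠ 0 := by
    have hpq : |⟪u, p - q⟫| < δ :=
      calc |⟪u, p - q⟫| ≤ ‖u‖ * ‖p - q‖ := abs_real_inner_le_norm _ _
        _ ≤ ‖p - q‖ := mul_le_of_le_one_left (norm_nonneg _) hu1
        _ < δ := by rwa [← dist_eq_norm, dist_comm]
    have hsplit : ⟪u, q - v 0⟫ = ⟪u, p - v 0⟫ - ⟪u, p - q⟫ := by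
      rw [← inner_sub_right, sub_sub_sub_cancel_left]
    intro h0
    rw [h0, eq_comm, sub_eq_zero] at hsplit
    rw [hsplit] at hp
    linarith
  have hq : q - v 0 ∉ simplexDir v ⊔ V := fun hmem =>
    hqu ((Submodule.mem_orthogonal' _ _).1 hu _ hmem)
  have hqD : q - v 0 ∉ simplexDir v := fun h => hq (Submodule.mem_sup_left h)
  refine ⟨(affineIndependent_iff_finrank_simplexDir _).2 ?_, ?_⟩
  · rw [simplexDir_cons, sup_comm, Submodule.finrank_sup_span_singleton hqD, hdim]
  · rw [simplexDir_cons]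
    exact hT.span_singleton_sup (by rwa [hdim]) hq

end Simplices

theorem finrank_stdFol_le {n k : ℕ} (hkn : k ≤ n) : finrank ℝ (stdFol n k) ≤ k := by
  let f : stdFol n k →ₗ[ℝ] EuclideanSpace ℝ (Fin k) :=
    { toFun := fun x => WithLp.toLp 2 fun j => (x : EuclideanSpace ℝ (Fin n)) (Fin.castLE hkn j)
      map_add' := fun _ _ => rfl
      map_smul' := fun _ _ => rfl }
  have hf : Function.Injective f := by
    intro x y hxy
    ext i
    by_cases h : (i : ℕ) < k
    · simpa [f, Fin.castLE] using congrFun (congrArg WithLp.ofLp hxy) ⟨i, h⟩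
    · rw [x.2 i (not_lt.1 h), y.2 i (not_lt.1 h)]
  simpa using LinearMap.finrank_le_finrank_of_injective hf

theorem stmt_18 (n k C : ℕ) (hk : k < n) (ε : ℝ) (hε : 0 < ε) :
    ∃ δ > (0:ℝ),
      ∀ (p : EuclideanSpace ℝ (Fin n)) (dm : Fin C → ℕ)
        (vs : (c : Fin C) → Fin (dm c + 1) → EuclideanSpace ℝ (Fin n)),
        (∀ c, AffineIndependent ℝ (vs c)) →
        (∀ c, Transv (simplexDir (vs c)) (stdFol n k)) →
        ∃ p' : EuclideanSpace ℝ (Fin n), dist p' p < ε ∧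
          Metric.ball p' δ ⊆ Metric.ball p ε ∧
          ∀ c, dm c < n - k → SemiT δ p' (vs c) (stdFol n k) := by
  obtain ⟨δ, hδ, hδε, hsep⟩ :=
    exists_norm_le_forall_le_abs_inner_sub (E := EuclideanSpace ℝ (Fin n)) (Fin C)
      (show 0 < ε / 4 by positivity)
  refine ⟨δ, hδ, fun p dm vs hAI hT => ?_⟩
  have hlt : ∀ c, dm c < n - k → dm c + finrank ℝ (stdFol n k) < n := fun c hc => by
    have := finrank_stdFol_le hk.le; omega
  have : NeZero n := ⟨by omega⟩
  have hu : ∀ c, ∃ u : EuclideanSpace ℝ (Fin n), ‖u‖ = 1 ∧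
      (dm c < n - k → u ∈ (simplexDir (vs c) ⊔ stdFol n k)ᗮ) := fun c => by
    by_cases hc : dm c < n - k
    · obtain ⟨u, hu1, hu⟩ := (hT c).exists_norm_eq_one_mem_orthogonal_sup
        (by rw [(affineIndependent_iff_finrank_simplexDir _).1 (hAI c)]; exact hlt c hc)
      exact ⟨u, hu1, fun _ => hu⟩
    · obtain ⟨u, hu1⟩ := exists_norm_eq (EuclideanSpace ℝ (Fin n)) zero_le_one
      exact ⟨u, hu1, fun h => absurd h hc⟩
  choose u hu1 hu using hu
  obtain ⟨x, hx, hxsep⟩ := hsep u hu1 fun c => ⟪u c, vs c 0 - p⟫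
  have hpx : dist (p + x) p ≤ ε / 4 := by rwa [dist_self_add_left]
  refine ⟨p + x, by linarith, ball_subset_ball' (by linarith), fun c hc =>
    semiT_of_le_abs_inner (hAI c) (hT c) (hlt c hc) (hu c hc) (hu1 c).le ?_⟩
  rw [show p + x - vs c 0 = x - (vs c 0 - p) by abel, inner_sub_right]
  exact hxsep c
end
end
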